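/- Claim 1 (simulated response equals honest response): let w, s, β, γ, α, v ∈ ZMod p with β and α invertible, let s_1, …, s_n, a_1, …, a_n, λ_1, …, λ_n ∈ ZMod p, set r = s_1 + … + s_n, B = g1^β, h = g2^γ, Y = e(g1, g2^w), and let m ∈ GT. With c2 = B^r, c3 = m · Y^r · e(c2, h), c4_ℓ = g1^{s_ℓ}, c5_ℓ = (g1^{a_ℓ})^{α·s_ℓ}, d0 = g2^{(w+s)·β⁻¹}, d1_ℓ = g2^s · (g2^{a_ℓ})^{λ_ℓ}, d3_ℓ = g2^{λ_ℓ·α⁻¹}, the simulated response Res' = c3 · (∏_{ℓ=1}^n e(c4_ℓ, d1_ℓ)) · e(B, h^v) · (e(c2, d0) · (∏_{ℓ=1}^n e(c5_ℓ, d3_ℓ)) · m)⁻¹ equals the honestly generated response e(B^{r+v}, h), i.e. Res' = e(B, h)^{r+v}. -/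
import Mathlib

/-- Exponentiation by an element of `ZMod p` via its natural-number representative. -/
def gpow {p : ℕ} {G : Type*} [Monoid G] (x : G) (a : ZMod p) : G := x ^ a.val

section helpers
variable {p : ℕ} [Fact p.Prime] {G : Type*} [CommGroup G] {x : G}

lemma pow_mod_tor (hx : x ^ p = 1) (k : ℕ) : x ^ k = x ^ (k % p) := by
  conv_lhs => rw [← Nat.div_add_mod k p, pow_add, pow_mul, hx, one_pow, one_mul]

lemma gpow_add (hx : x ^ p = 1) (a b : ZMod p) :
    gpow x (a + b) = gpow x a * gpow x b := by
  unfold gpow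
  rw [ZMod.val_add, ← pow_mod_tor hx, pow_add]

lemma gpow_gpow (hx : x ^ p = 1) (a b : ZMod p) :
    gpow (gpow x a) b = gpow x (a * b) := by
  unfold gpow
  rw [ZMod.val_mul, ← pow_mod_tor hx, pow_mul]

lemma gpow_zero : gpow x (0 : ZMod p) = 1 := by
  simp [gpow, ZMod.val_zero]

lemma gpow_one' : gpow x (1 : ZMod p) = x := by
  have : ((1 : ZMod p)).val = 1 := ZMod.val_one p
  simp [gpow, this]

lemma gpow_inv (hx : x ^ p = 1) (a : ZMod p) : (gpow x a)⁻¹ = gpow x (-a) := by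
  rw [inv_eq_iff_mul_eq_one, ← gpow_add hx, add_neg_cancel, gpow_zero]

lemma gpow_sum (hx : x ^ p = 1) {n : ℕ} (f : Fin n → ZMod p) :
    ∏ ℓ, gpow x (f ℓ) = gpow x (∑ ℓ, f ℓ) := by
  induction n with
  | zero => simp [gpow_zero]
  | succ n ih =>
    rw [Fin.prod_univ_succ, Fin.sum_univ_succ, gpow_add hx, ih (fun i => f i.succ)]

end helpers

theorem stmt_7 {p : ℕ} [Fact p.Prime]
    {G1 G2 GT : Type*} [CommGroup G1] [CommGroup G2] [CommGroup GT]
    (g1 : G1) (g2 : G2) (e : G1 → G2 → GT)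
    (htor1 : ∀ x : G1, x ^ p = 1) (htor2 : ∀ y : G2, y ^ p = 1)
    (htorT : ∀ z : GT, z ^ p = 1)
    (ebil1 : ∀ (x x' : G1) (y : G2), e (x * x') y = e x y * e x' y)
    (ebil2 : ∀ (x : G1) (y y' : G2), e x (y * y') = e x y * e x y')
    (epow : ∀ a b : ZMod p, e (gpow g1 a) (gpow g2 b) = gpow (e g1 g2) (a * b))
    (n : ℕ) (w s0 β γ α v : ZMod p) (hβ : IsUnit β) (hα : IsUnit α)
    (s a lam : Fin n → ZMod p) (r : ZMod p) (hr : r = ∑ ℓ, s ℓ)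
    (B : G1) (hB : B = gpow g1 β)
    (h : G2) (hh : h = gpow g2 γ)
    (Y : GT) (hY : Y = e g1 (gpow g2 w))
    (m : GT)
    (c2 : G1) (hc2 : c2 = gpow B r)
    (c3 : GT) (hc3 : c3 = m * gpow Y r * e c2 h)
    (c4 : Fin n → G1) (hc4 : ∀ ℓ, c4 ℓ = gpow g1 (s ℓ))
    (c5 : Fin n → G1) (hc5 : ∀ ℓ, c5 ℓ = gpow (gpow g1 (a ℓ)) (α * s ℓ))
    (d0 : G2) (hd0 : d0 = gpow g2 ((w + s0) * β⁻¹))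
    (d1 : Fin n → G2) (hd1 : ∀ ℓ, d1 ℓ = gpow g2 s0 * gpow (gpow g2 (a ℓ)) (lam ℓ))
    (d3 : Fin n → G2) (hd3 : ∀ ℓ, d3 ℓ = gpow g2 (lam ℓ * α⁻¹))
    (Res' : GT)
    (hRes' : Res' = c3 * (∏ ℓ, e (c4 ℓ) (d1 ℓ)) * e B (gpow h v) *
      (e c2 d0 * (∏ ℓ, e (c5 ℓ) (d3 ℓ)) * m)⁻¹) :
    Res' = gpow (e B h) (r + v) := by
  set t := e g1 g2 with ht
  have htorT' := htorT t
  have hβ' : β⁻¹ * β = 1 := inv_mul_cancel₀ hβ.ne_zero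
  have hα' : α⁻¹ * α = 1 := inv_mul_cancel₀ hα.ne_zero
  -- rewrite each pairing as a power of t
  have hY' : Y = gpow t w := by
    rw [hY, ← gpow_one' (x := g1) (p := p), epow, one_mul]
  have hc2' : c2 = gpow g1 (β * r) := by rw [hc2, hB, gpow_gpow (htor1 g1)]
  have heBh : e B h = gpow t (β * γ) := by rw [hB, hh, epow]
  have hec2h : e c2 h = gpow t (β * r * γ) := by rw [hc2', hh, epow]
  have hc3' : c3 = m * gpow t (w * r) * gpow t (β * r * γ) := by
    rw [hc3, hY', gpow_gpow htorT', hec2h]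
  have hterm1 : ∀ ℓ, e (c4 ℓ) (d1 ℓ) = gpow t (s ℓ * (s0 + a ℓ * lam ℓ)) := by
    intro ℓ
    rw [hc4, hd1, gpow_gpow (htor2 g2), ← gpow_add (htor2 g2), epow]
  have hterm2 : ∀ ℓ, e (c5 ℓ) (d3 ℓ) = gpow t (a ℓ * (α * s ℓ) * (lam ℓ * α⁻¹)) := by
    intro ℓ
    rw [hc5, hd3, gpow_gpow (htor1 g1), epow]
  have heBhv : e B (gpow h v) = gpow t (β * (γ * v)) := by
    rw [hB, hh, gpow_gpow (htor2 g2), epow]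
  have hec2d0 : e c2 d0 = gpow t (β * r * ((w + s0) * β⁻¹)) := by
    rw [hc2', hd0, epow]
  have hprod1 : (∏ ℓ, e (c4 ℓ) (d1 ℓ)) = gpow t (∑ ℓ, s ℓ * (s0 + a ℓ * lam ℓ)) := by
    rw [← gpow_sum htorT']
    exact Finset.prod_congr rfl fun ℓ _ => hterm1 ℓ
  have hprod2 : (∏ ℓ, e (c5 ℓ) (d3 ℓ)) = gpow t (∑ ℓ, a ℓ * (α * s ℓ) * (lam ℓ * α⁻¹)) := by
    rw [← gpow_sum htorT']
    exact Finset.prod_congr rfl fun ℓ _ => hterm2 ℓ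
  have hsum2 : (∑ ℓ, a ℓ * (α * s ℓ) * (lam ℓ * α⁻¹)) = ∑ ℓ, a ℓ * s ℓ * lam ℓ := by
    apply Finset.sum_congr rfl
    intro ℓ _
    have : a ℓ * (α * s ℓ) * (lam ℓ * α⁻¹) = (α⁻¹ * α) * (a ℓ * s ℓ * lam ℓ) := by ring
    rw [this, hα', one_mul]
  have hsum1 : (∑ ℓ, s ℓ * (s0 + a ℓ * lam ℓ)) = r * s0 + ∑ ℓ, a ℓ * s ℓ * lam ℓ := by
    rw [hr, Finset.sum_mul, ← Finset.sum_add_distrib]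
    apply Finset.sum_congr rfl
    intro ℓ _
    ring
  have hd0exp : β * r * ((w + s0) * β⁻¹) = r * w + r * s0 := by
    have : β * r * ((w + s0) * β⁻¹) = (β⁻¹ * β) * (r * w + r * s0) := by ring
    rw [this, hβ', one_mul]
  have final : ∀ X Y : ZMod p, X + -Y = β * γ * (r + v) →
      m * gpow t X * (gpow t Y * m)⁻¹ = gpow t (β * γ * (r + v)) := by
    intro X Y hXY
    rw [mul_inv, gpow_inv htorT', mul_comm m (gpow t X), mul_assoc,
        mul_comm (gpow t (-Y)) m⁻¹, mul_inv_cancel_left,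
        ← gpow_add htorT', hXY]
  rw [hRes', hc3', hprod1, hsum1, heBhv, hec2d0, hd0exp, hprod2, hsum2, heBh,
      gpow_gpow htorT']
  rw [mul_assoc m, ← gpow_add htorT', mul_assoc m, ← gpow_add htorT',
      mul_assoc m, ← gpow_add htorT', ← gpow_add htorT']
  exact final _ _ (by ring)
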